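/- For every nonnegative integer n and real number ℓ, the sum over i from 0 to n of binomial(2n-i, n-i) * binomial(ℓ+i-1, i) equals binomial(2n+ℓ, n). -/

import Mathlib

/-!
Upper negation `choose (-r) k = (-1)^k * choose (r + k - 1) k` turns `C(2n-i, n-i)` into
`±choose (-(n+1)) (n-i)`, `choose (ℓ+i-1) i` into `±choose (-ℓ) i` and `choose (2n+ℓ) n` into
`±choose (-ℓ-(n+1)) n`, with the same total sign `(-1)^n`; the identity is then Chu–Vandermonde
for `-ℓ` and `-(n+1)`.
-/

/-- Generalized binomial coefficient with real upper argument. -/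
noncomputable def rchoose (x : ℝ) (k : ℕ) : ℝ :=
  (∏ j ∈ Finset.range k, (x - j)) / (Nat.factorial k : ℝ)

open Finset Polynomial

theorem rchoose_eq_ringChoose (x : ℝ) (k : ℕ) : rchoose x k = Ring.choose x k := by
  rw [Ring.choose_eq_smul, rchoose, ← aeval_eq_smeval, ← eval_map_algebraMap, descPochhammer_map,
    descPochhammer_eval_eq_prod_range, smul_eq_mul, div_eq_inv_mul]

namespace Ring

variable {R : Type*} [Ring R] [BinomialRing R]

theorem choose_neg_eq_neg_one_pow_mul (r : R) (k : ℕ) :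
    choose (-r) k = (-1) ^ k * choose (r + k - 1) k := by
  rw [choose_neg, Units.smul_def, zsmul_eq_mul, Int.cast_negOnePow_natCast]

theorem choose_neg_natCast_add_one (n k : ℕ) :
    choose (-(n + 1 : R)) k = (-1) ^ k * (Nat.choose (n + k) k : R) := by
  rw [choose_neg_eq_neg_one_pow_mul, ← choose_natCast, add_sub_right_comm, add_sub_cancel_right,
    Nat.cast_add]

theorem sum_choose_mul_choose_add_sub_one (r : R) (n : ℕ) :
    ∑ i ∈ range (n + 1), (Nat.choose (2 * n - i) (n - i) : R) * choose (r + i - 1) i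
      = choose (2 * n + r) n := by
  have hcomm : Commute (-r) (-(n + 1 : R)) := by
    simpa using (Nat.cast_commute (n + 1) r).neg_right.neg_left.symm
  have hterm : ∀ i ∈ range (n + 1), choose (-r) i * choose (-(n + 1 : R)) (n - i)
      = (-1) ^ n * ((Nat.choose (2 * n - i) (n - i) : R) * choose (r + i - 1) i) := by
    intro i hi
    have hin : i ≤ n := Nat.lt_succ_iff.mp (mem_range.mp hi)
    rw [choose_neg_eq_neg_one_pow_mul, choose_neg_natCast_add_one,
      ((Commute.neg_one_right _).pow_right _).mul_mul_mul_comm, ← pow_add,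
      Nat.add_sub_cancel' hin, show n + (n - i) = 2 * n - i by omega, Nat.cast_comm]
  have hrhs : choose (-r + -(n + 1 : R)) n = (-1) ^ n * choose (2 * n + r) n := by
    rw [← neg_add, choose_neg_eq_neg_one_pow_mul]
    congr 2
    noncomm_ring
  have hvandermonde := add_choose_eq n hcomm
  rw [Nat.sum_antidiagonal_eq_sum_range_succ_mk, sum_congr rfl hterm, ← mul_sum, hrhs]
    at hvandermonde
  exact ((isUnit_neg_one.pow n).mul_left_cancel hvandermonde).symm

end Ring

theorem sum_binom_rchoose (n : ℕ) (ℓ : ℝ) :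
    ∑ i ∈ Finset.range (n + 1),
        (Nat.choose (2 * n - i) (n - i) : ℝ) * rchoose (ℓ + (i : ℝ) - 1) i
      = rchoose (2 * (n : ℝ) + ℓ) n := by
  simp only [rchoose_eq_ringChoose]
  exact Ring.sum_choose_mul_choose_add_sub_one ℓ n
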